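/- Interval refinement with controlled variation: Let I ⊆ ℝ be an interval, X a family of norms ‖·‖_{X(J)} indexed by subintervals J ⊆ I, monotone under restriction (‖φ|_{J'}‖_{X(J')} ≤ ‖φ‖_{X(J)} for J' ⊆ J) and subadditive under concatenation (‖φ‖_{X(J₁∪J₂)} ≤ ‖φ|_{J₁}‖_{X(J₁)} + ‖φ|_{J₂}‖_{X(J₂)} for adjacent J₁,J₂). Let (Y,ν) be a finite measure space, (φ_y)_{y∈Y} a measurable family, M ≥ 1, F ∈ L¹(ν), and suppose each y ∈ Y admits a partition 𝒥_y of I into at most M intervals with ‖φ_y|_{J}‖_{X(J)} ≤ F(y) for all J ∈ 𝒥_y. Then there is a single partition 𝒥 of I into at most M intervals such that ‖(∫_Y φ_y dν(y))|_J‖_{X(J)} ≤ 3∫_Y F dν for every J ∈ 𝒥. -/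

import Mathlib

/-!
For each `y`, subadditivity over the pieces of `T y` meeting an interval `P` bounds the norm of
`φ y` on `P` by `F y` times the number of these pieces, and that number is at most
`n_y(t₂) - n_y(t₁) + 1` for some `t₁ ≤ t₂` in `P`, where `n_y(t)` counts the pieces meeting
`(-∞, t]`. The weighted count `Φ(t) = ∫ n_y(t) F(y) dν(y)` is monotone with values in
`[0, M ∫ F]`; cutting `I` where `Φ` crosses the multiples of `2 ∫ F` gives at most `M` intervals
on each of which `Φ` oscillates by at most `2 ∫ F`, and Minkowski's inequality bounds the norm of
the average there by `2 ∫ F + ∫ F`.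

The count `n_y(t)` is measurable in `y` although "the piece meets `(-∞, t]`" is a projection:
a piece meets `(-∞, t]` iff it contains a point `≤ t` among the rationals, `sInf I` and the
suprema of the rational points of the pieces.
-/
open MeasureTheory Set Filter

open scoped Classical

theorem Set.OrdConnected.forall_lt_of_disjoint {α : Type*} [LinearOrder α] {A B : Set α}
    (hA : A.OrdConnected) (hB : B.OrdConnected) (hAB : Disjoint A B) {a b : α} (ha : a ∈ A)
    (hb : b ∈ B) (hab : a < b) : ∀ u ∈ A, ∀ v ∈ B, u < v := by
  intro u hu v hv
  by_contra! hvu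
  rcases le_or_gt a v with hav | hva
  · exact disjoint_left.mp hAB (hA.out ha hu ⟨hav, hvu⟩) hv
  · exact disjoint_left.mp hAB ha (hB.out hv hb ⟨hva.le, hab.le⟩)

/-- Pieces may be empty, so the index type only bounds the number of intervals. -/
structure IsIntervalPartition {α ι : Type*} [Preorder α] (I : Set α) (T : ι → Set α) : Prop where
  iUnion_eq : ⋃ i, T i = I
  pairwise_disjoint : Pairwise fun i j => Disjoint (T i) (T j)
  ordConnected : ∀ i, (T i).OrdConnected

noncomputable def piecesMeeting {α ι : Type*} [Fintype ι] (T : ι → Set α) (P : Set α) :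
    Finset ι :=
  Finset.univ.filter fun i => (T i ∩ P).Nonempty

theorem mem_piecesMeeting {α ι : Type*} [Fintype ι] {T : ι → Set α} {P : Set α} {i : ι} :
    i ∈ piecesMeeting T P ↔ (T i ∩ P).Nonempty := by
  simp [piecesMeeting]

theorem piecesMeeting_mono {α ι : Type*} [Fintype ι] {T : ι → Set α} {P Q : Set α}
    (hPQ : P ⊆ Q) : piecesMeeting T P ⊆ piecesMeeting T Q := fun _ hi =>
  mem_piecesMeeting.mpr ((mem_piecesMeeting.mp hi).mono (inter_subset_inter_right _ hPQ))

theorem monotone_card_piecesMeeting_Iic {α ι : Type*} [Preorder α] [Fintype ι]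
    (T : ι → Set α) : Monotone fun t => ((piecesMeeting T (Iic t)).card : ℝ) := fun _ _ hst =>
  Nat.cast_le.mpr (Finset.card_le_card (piecesMeeting_mono (Iic_subset_Iic.mpr hst)))

namespace IsIntervalPartition

section Order

variable {α ι : Type*} [LinearOrder α] {I : Set α} {T : ι → Set α}

theorem subset (hT : IsIntervalPartition I T) (i : ι) : T i ⊆ I :=
  hT.iUnion_eq ▸ subset_iUnion T i

theorem exists_mem (hT : IsIntervalPartition I T) {x : α} (hx : x ∈ I) : ∃ i, x ∈ T i :=
  mem_iUnion.mp (hT.iUnion_eq ▸ hx)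

theorem eq_of_mem (hT : IsIntervalPartition I T) {i j : ι} {x : α} (hi : x ∈ T i)
    (hj : x ∈ T j) : i = j := by
  by_contra hij
  exact disjoint_left.mp (hT.pairwise_disjoint hij) hi hj

theorem forall_lt_of_le (hT : IsIntervalPartition I T) {i j : ι} (hij : i ≠ j) {a b : α}
    (ha : a ∈ T i) (hb : b ∈ T j) (hab : a ≤ b) : ∀ u ∈ T i, ∀ v ∈ T j, u < v :=
  (hT.ordConnected i).forall_lt_of_disjoint (hT.ordConnected j) (hT.pairwise_disjoint hij) ha hb
    (hab.lt_of_ne fun h => hij (hT.eq_of_mem ha (h ▸ hb)))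

theorem piecesMeeting_nonempty [Fintype ι] (hT : IsIntervalPartition I T) {P : Set α}
    (hPI : P ⊆ I) (hP : P.Nonempty) : (piecesMeeting T P).Nonempty := by
  obtain ⟨x, hx⟩ := hP
  obtain ⟨i, hi⟩ := hT.exists_mem (hPI hx)
  exact ⟨i, mem_piecesMeeting.mpr ⟨x, hi, hx⟩⟩

end Order

variable {α ι : Type*} [LinearOrder α] [Fintype ι] {I : Set α} {T : ι → Set α}

/-- The piece carrying the largest of the points chosen in the pieces meeting `Ioo w s`
contains a left neighbourhood of `s`. -/
theorem exists_Ioo_subset [DenselyOrdered α] (hT : IsIntervalPartition I T) {w s : α}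
    (hws : w < s) (hI : Ioo w s ⊆ I) : ∃ i, ∃ w' < s, Ioo w' s ⊆ T i := by
  have : Nonempty α := ⟨w⟩
  choose! p hp using fun i (hi : i ∈ piecesMeeting T (Ioo w s)) => mem_piecesMeeting.mp hi
  obtain ⟨i₀, hi₀, hmax⟩ := (piecesMeeting T (Ioo w s)).exists_max_image p
    (hT.piecesMeeting_nonempty hI (nonempty_Ioo.mpr hws))
  refine ⟨i₀, p i₀, (hp i₀ hi₀).2.2, fun z hz => ?_⟩
  have hzI : z ∈ Ioo w s := ⟨(hp i₀ hi₀).2.1.trans hz.1, hz.2⟩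
  obtain ⟨k, hk⟩ := hT.exists_mem (hI hzI)
  have hkmeet : k ∈ piecesMeeting T (Ioo w s) := mem_piecesMeeting.mpr ⟨z, hk, hzI⟩
  by_cases hki : k = i₀
  · exact hki ▸ hk
  · exact absurd (hT.forall_lt_of_le hki (hp k hkmeet).1 (hp i₀ hi₀).1 (hmax k hkmeet) z hk
      (p i₀) (hp i₀ hi₀).1) hz.1.not_gt

theorem le_card_piecesMeeting_mul (hT : IsIntervalPartition I T) (μ : Set α → ℝ)
    (hmono : ∀ J' J, J' ⊆ J → μ J' ≤ μ J)
    (hsub : ∀ J₁ J₂, (J₁ ∪ J₂).OrdConnected → μ (J₁ ∪ J₂) ≤ μ J₁ + μ J₂)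
    {c : ℝ} (hc : ∀ i, μ (T i) ≤ c) {P : Set α} (hP : P.OrdConnected) (hPI : P ⊆ I)
    (hPne : P.Nonempty) : μ P ≤ (piecesMeeting T P).card * c := by
  obtain ⟨n, hn⟩ : ∃ n, (piecesMeeting T P).card = n := ⟨_, rfl⟩
  induction n generalizing P with
  | zero =>
    exact absurd hn (Finset.card_ne_zero.mpr (hT.piecesMeeting_nonempty hPI hPne))
  | succ n ih =>
    have : Nonempty α := ⟨hPne.some⟩
    choose! p hp using fun i (hi : i ∈ piecesMeeting T P) => mem_piecesMeeting.mp hi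
    obtain ⟨i₀, hi₀, hmax⟩ := (piecesMeeting T P).exists_max_image p
      (hT.piecesMeeting_nonempty hPI hPne)
    -- every other piece meeting `P` lies to the left of `T i₀`, so `P \ T i₀` is an interval
    have hleft : ∀ x ∈ P \ T i₀, ∀ v ∈ T i₀, x < v := by
      rintro x ⟨hxP, hxi₀⟩ v hv
      obtain ⟨k, hk⟩ := hT.exists_mem (hPI hxP)
      have hkmeet : k ∈ piecesMeeting T P := mem_piecesMeeting.mpr ⟨x, hk, hxP⟩
      exact hT.forall_lt_of_le (by rintro rfl; exact hxi₀ hk) (hp k hkmeet).1 (hp i₀ hi₀).1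
        (hmax k hkmeet) x hk v hv
    have hconn : (P \ T i₀).OrdConnected := ⟨fun x hx z hz y hy =>
      ⟨hP.out hx.1 hz.1 hy, fun hyi₀ => (hleft z hz y hyi₀).not_ge hy.2⟩⟩
    have herase : piecesMeeting T (P \ T i₀) = (piecesMeeting T P).erase i₀ := by
      ext j
      simp only [Finset.mem_erase, mem_piecesMeeting]
      constructor
      · rintro ⟨x, hxj, hxP, hxi₀⟩
        exact ⟨fun h => hxi₀ (h ▸ hxj), x, hxj, hxP⟩
      · rintro ⟨hji₀, x, hxj, hxP⟩
        exact ⟨x, hxj, hxP, fun hxi₀ => hji₀ (hT.eq_of_mem hxj hxi₀)⟩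
    have hcard : (piecesMeeting T (P \ T i₀)).card = n := by
      rw [herase, Finset.card_erase_of_mem hi₀, hn, Nat.add_sub_cancel]
    have hsplit : μ P ≤ μ (P \ T i₀) + c :=
      calc μ P = μ (P \ T i₀ ∪ P ∩ T i₀) := by rw [sdiff_union_inter]
        _ ≤ μ (P \ T i₀) + μ (P ∩ T i₀) := hsub _ _ (by rwa [sdiff_union_inter])
        _ ≤ μ (P \ T i₀) + c := by gcongr; exact (hmono _ _ inter_subset_right).trans (hc i₀)
    rcases (P \ T i₀).eq_empty_or_nonempty with hempty | hne
    · have hn0 : n = 0 := by simpa [hempty, piecesMeeting] using hcard.symm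
      subst hn0
      rw [hn, zero_add, Nat.cast_one, one_mul]
      exact (hmono _ _ (sdiff_eq_empty.mp hempty)).trans (hc i₀)
    · have := ih hconn (sdiff_subset.trans hPI) hne hcard
      rw [hcard] at this
      rw [hn]
      push_cast
      linarith

theorem exists_card_piecesMeeting_add_le (hT : IsIntervalPartition I T) {P : Set α}
    (hPI : P ⊆ I) (hPne : P.Nonempty) : ∃ t₁ ∈ P, ∃ t₂ ∈ P,
      (piecesMeeting T P).card + (piecesMeeting T (Iic t₁)).card ≤
        (piecesMeeting T (Iic t₂)).card + 1 := by
  have : Nonempty α := ⟨hPne.some⟩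
  choose! p hp using fun i (hi : i ∈ piecesMeeting T P) => mem_piecesMeeting.mp hi
  have hS := hT.piecesMeeting_nonempty hPI hPne
  obtain ⟨i₁, hi₁, hmin⟩ := (piecesMeeting T P).exists_min_image p hS
  obtain ⟨i₂, hi₂, hmax⟩ := (piecesMeeting T P).exists_max_image p hS
  refine ⟨p i₁, (hp i₁ hi₁).2, p i₂, (hp i₂ hi₂).2, ?_⟩
  have hunion : piecesMeeting T P ∪ piecesMeeting T (Iic (p i₁)) ⊆
      piecesMeeting T (Iic (p i₂)) :=
    Finset.union_subset
      (fun j hj => mem_piecesMeeting.mpr ⟨p j, (hp j hj).1, hmax j hj⟩)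
      (piecesMeeting_mono (Iic_subset_Iic.mpr (hmax i₁ hi₁)))
  -- a piece meeting both `P` and `Iic (p i₁)` contains `p i₁`
  have hinter : piecesMeeting T P ∩ piecesMeeting T (Iic (p i₁)) ⊆ {i₁} := by
    intro j hj
    obtain ⟨hjP, hj₁⟩ := Finset.mem_inter.mp hj
    obtain ⟨u, hu, hut⟩ := mem_piecesMeeting.mp hj₁
    by_contra hji₁
    exact (hT.forall_lt_of_le (Ne.symm (Finset.notMem_singleton.mp hji₁)) (hp i₁ hi₁).1
      (hp j hjP).1 (hmin j hjP) _ (hp i₁ hi₁).1 u hu).not_ge hut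
  have := Finset.card_union_add_card_inter (piecesMeeting T P) (piecesMeeting T (Iic (p i₁)))
  have := Finset.card_le_card hunion
  have := (Finset.card_le_card hinter).trans (Finset.card_singleton i₁).le
  omega

end IsIntervalPartition

/-- Meaningful only when `S` has rational points and is bounded above; otherwise
`EReal.toReal` returns the junk value `0`. -/
noncomputable def ratSup (S : Set ℝ) : ℝ :=
  (⨆ q : ℚ, if (q : ℝ) ∈ S then ((q : ℝ) : EReal) else ⊥).toReal

theorem ratSup_eq {S : Set ℝ} {w s : ℝ} (hws : w < s) (hIoo : Ioo w s ⊆ S) (hS : S ⊆ Iic s) :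
    ratSup S = s := by
  suffices h : (⨆ q : ℚ, if (q : ℝ) ∈ S then ((q : ℝ) : EReal) else ⊥) = s by
    rw [ratSup, h, EReal.toReal_coe]
  refine le_antisymm (iSup_le fun q => ?_) (le_of_forall_lt fun b hb => ?_)
  · split_ifs with hq
    · exact EReal.coe_le_coe_iff.mpr (hS hq)
    · exact bot_le
  · obtain ⟨q, hq, hqs⟩ := EReal.exists_rat_btwn_of_lt (max_lt hb (EReal.coe_lt_coe_iff.mpr hws))
    have hqS : (q : ℝ) ∈ S :=
      hIoo ⟨EReal.coe_lt_coe_iff.mp ((le_max_right _ _).trans_lt hq), EReal.coe_lt_coe_iff.mp hqs⟩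
    exact lt_iSup_iff.mpr ⟨q, by rw [if_pos hqS]; exact (le_max_left _ _).trans_lt hq⟩

/-- A piece without rational points `≤ t` starts at a point `s`; either `s = min I`, or `s` is
the right end of the piece to its left. -/
theorem IsIntervalPartition.inter_Iic_nonempty_iff {ι : Type*} [Fintype ι] {I : Set ℝ}
    {T : ι → Set ℝ} (hI : I.OrdConnected) (hT : IsIntervalPartition I T) (i : ι) (t : ℝ) :
    (T i ∩ Iic t).Nonempty ↔ (∃ q : ℚ, (q : ℝ) ≤ t ∧ (q : ℝ) ∈ T i) ∨
      (sInf I ≤ t ∧ sInf I ∈ T i) ∨ ∃ j, ratSup (T j) ≤ t ∧ ratSup (T j) ∈ T i := by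
  constructor
  · rintro ⟨s, hs, hst⟩
    by_cases hq : ∃ q : ℚ, (q : ℝ) ≤ t ∧ (q : ℝ) ∈ T i
    · exact Or.inl hq
    right
    have hleft : ∀ z ∈ T i, s ≤ z := by
      intro z hz
      by_contra! hzs
      obtain ⟨q, hzq, hqs⟩ := exists_rat_btwn hzs
      exact hq ⟨q, hqs.le.trans hst, (hT.ordConnected i).out hz hs ⟨hzq.le, hqs.le⟩⟩
    by_cases hmin : ∀ z ∈ I, s ≤ z
    · rw [(show IsLeast I s from ⟨hT.subset i hs, hmin⟩).csInf_eq]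
      exact Or.inl ⟨hst, hs⟩
    push Not at hmin
    obtain ⟨w, hwI, hws⟩ := hmin
    obtain ⟨j, w', hw's, hj⟩ :=
      hT.exists_Ioo_subset hws (Ioo_subset_Icc_self.trans (hI.out hwI (hT.subset i hs)))
    obtain ⟨m, hw'm, hms⟩ := exists_between hw's
    have hji : j ≠ i := by
      rintro rfl
      exact (hleft m (hj ⟨hw'm, hms⟩)).not_gt hms
    have hjs : T j ⊆ Iic s := by
      intro z hz
      by_contra! hsz
      rw [mem_Iic, not_le] at hsz
      exact hji (hT.eq_of_mem ((hT.ordConnected j).out (hj ⟨hw'm, hms⟩) hz ⟨hms.le, hsz.le⟩) hs)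
    rw [← ratSup_eq hw's hj hjs] at hst hs
    exact Or.inr ⟨j, hst, hs⟩
  · rintro (⟨q, hqt, hq⟩ | ⟨ht, h⟩ | ⟨j, ht, h⟩)
    exacts [⟨_, hq, hqt⟩, ⟨_, h, ht⟩, ⟨_, h, ht⟩]

section Measurability

variable {Y : Type*} [MeasurableSpace Y]

theorem measurableSet_apply_mem {S : Y → Set ℝ} (hS : MeasurableSet {p : Y × ℝ | p.2 ∈ S p.1})
    {g : Y → ℝ} (hg : Measurable g) : MeasurableSet {y | g y ∈ S y} :=
  hS.preimage (measurable_id.prodMk hg)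

theorem measurable_ratSup {S : Y → Set ℝ} (hS : MeasurableSet {p : Y × ℝ | p.2 ∈ S p.1}) :
    Measurable fun y => ratSup (S y) :=
  (Measurable.iSup fun _ => Measurable.ite (measurableSet_apply_mem hS measurable_const)
    measurable_const measurable_const).ereal_toReal

variable {ι : Type*} [Fintype ι] {I : Set ℝ} {T : Y → ι → Set ℝ}

theorem measurable_card_piecesMeeting_Iic (hI : I.OrdConnected)
    (hT : ∀ y, IsIntervalPartition I (T y))
    (hTmeas : ∀ i, MeasurableSet {p : Y × ℝ | p.2 ∈ T p.1 i}) (t : ℝ) :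
    Measurable fun y => ((piecesMeeting (T y) (Iic t)).card : ℝ) := by
  have hprobe : ∀ i (g : Y → ℝ), Measurable g → MeasurableSet {y | g y ≤ t ∧ g y ∈ T y i} :=
    fun i _ hg =>
      (measurableSet_le hg measurable_const).inter (measurableSet_apply_mem (hTmeas i) hg)
  have hmeet : ∀ i, MeasurableSet {y | (T y i ∩ Iic t).Nonempty} := by
    intro i
    simp_rw [(hT _).inter_Iic_nonempty_iff hI, ofPred_or, ofPred_exists]
    exact (MeasurableSet.iUnion fun _ => hprobe i _ measurable_const).union
      ((hprobe i _ measurable_const).union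
        (MeasurableSet.iUnion fun j => hprobe i _ (measurable_ratSup (hTmeas j))))
  simp only [piecesMeeting, Finset.card_filter, Nat.cast_sum, Nat.cast_ite, Nat.cast_one,
    Nat.cast_zero]
  exact Finset.measurable_sum _ fun i _ =>
    Measurable.ite (hmeet i) measurable_const measurable_const

end Measurability

section Integration

variable {Y : Type*} [MeasurableSpace Y] {ν : Measure Y}

theorem integrable_and_integral_le_of_tendsto {h : ℕ → Y → ℝ} {g B : Y → ℝ}
    (hh : ∀ n, AEStronglyMeasurable (h n) ν) (hB : Integrable B ν)
    (hbound : ∀ n y, ‖h n y‖ ≤ B y) (hlim : ∀ y, Tendsto (fun n => h n y) atTop (nhds (g y)))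
    {C : ℝ} (hC : ∀ n, ∫ y, h n y ∂ν ≤ C) : Integrable g ν ∧ ∫ y, g y ∂ν ≤ C :=
  ⟨hB.mono' (aestronglyMeasurable_of_tendsto_ae atTop hh (ae_of_all _ hlim))
      (ae_of_all _ fun y => le_of_tendsto (hlim y).norm (Eventually.of_forall (hbound · y))),
    le_of_tendsto (tendsto_integral_of_dominated_convergence B hh hB
      (fun n => ae_of_all _ (hbound n)) (ae_of_all _ hlim)) (Eventually.of_forall hC)⟩

/-- The majorant is the limit along sequences running to the two ends of `P`. -/
theorem exists_integrable_majorant_of_oscillation_le {G : Y → ℝ → ℝ} {F : Y → ℝ} {P : Set ℝ}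
    {B C : ℝ} (hG : ∀ y, Monotone (G y)) (hGB : ∀ y t, |G y t| ≤ B)
    (hGm : ∀ t, Measurable fun y => G y t) (hF : Integrable F ν) (hF0 : ∀ y, 0 ≤ F y)
    (hP : P.OrdConnected) (hPne : P.Nonempty)
    (hosc : ∀ t₁ ∈ P, ∀ t₂ ∈ P, ∫ y, G y t₂ * F y ∂ν - ∫ y, G y t₁ * F y ∂ν ≤ C) :
    ∃ g : Y → ℝ, Integrable g ν ∧ ∫ y, g y ∂ν ≤ C + ∫ y, F y ∂ν ∧
      ∀ y, ∀ t₁ ∈ P, ∀ t₂ ∈ P, (G y t₂ - G y t₁ + 1) * F y ≤ g y := by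
  have : Nonempty P := hPne.to_subtype
  have : P.OrdConnected := hP
  obtain ⟨d, hd, hdtop⟩ := exists_seq_monotone_tendsto_atTop_atTop P
  obtain ⟨e, he, hebot⟩ := exists_seq_antitone_tendsto_atTop_atBot P
  have hsup : ∀ y, BddAbove (range fun n => G y (d n)) := fun y =>
    ⟨B, by rintro _ ⟨n, rfl⟩; exact (le_abs_self _).trans (hGB _ _)⟩
  have hinf : ∀ y, BddBelow (range fun n => G y (e n)) := fun y =>
    ⟨-B, by rintro _ ⟨n, rfl⟩; exact neg_le_of_abs_le (hGB _ _)⟩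
  have hGF : ∀ t, Integrable (fun y => G y t * F y) ν := fun t =>
    hF.bdd_mul (hGm t).aestronglyMeasurable (ae_of_all _ fun y => (hGB y t))
  set h : ℕ → Y → ℝ := fun n y => (G y (d n) - G y (e n) + 1) * F y
  have hmeas : ∀ n, AEStronglyMeasurable (h n) ν := fun n =>
    (((hGm _).sub (hGm _)).add_const 1).aestronglyMeasurable.mul hF.aestronglyMeasurable
  have hbound : ∀ n y, ‖h n y‖ ≤ (2 * B + 1) * F y := fun n y => by
    rw [norm_mul, Real.norm_of_nonneg (hF0 y), Real.norm_eq_abs]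
    refine mul_le_mul_of_nonneg_right ?_ (hF0 y)
    have hd := abs_le.mp (hGB y (d n))
    have he := abs_le.mp (hGB y (e n))
    exact abs_le.mpr ⟨by linarith, by linarith⟩
  have hlim : ∀ y, Tendsto (fun n => h n y) atTop
      (nhds (((⨆ n, G y (d n)) - (⨅ n, G y (e n)) + 1) * F y)) := fun y =>
    (((tendsto_atTop_ciSup ((hG y).comp (Subtype.mono_coe _ |>.comp hd)) (hsup y)).sub
      (tendsto_atTop_ciInf ((hG y).comp_antitone (Subtype.mono_coe _ |>.comp_antitone he))
        (hinf y))).add_const 1).mul_const (F y)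
  have hint : ∀ n, ∫ y, h n y ∂ν ≤ C + ∫ y, F y ∂ν := fun n => by
    have hdiff : Integrable (fun y => G y (d n) * F y - G y (e n) * F y) ν :=
      (hGF _).sub (hGF _)
    have hsplit : ∫ y, h n y ∂ν =
        ∫ y, G y (d n) * F y ∂ν - ∫ y, G y (e n) * F y ∂ν + ∫ y, F y ∂ν := by
      rw [← integral_sub (hGF _) (hGF _), ← integral_add hdiff hF]
      congr 1 with y
      ring
    linarith [hosc _ (e n).2 _ (d n).2]
  obtain ⟨hg, hgC⟩ :=
    integrable_and_integral_le_of_tendsto hmeas (hF.const_mul _) hbound hlim hint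
  refine ⟨_, hg, hgC, fun y t₁ ht₁ t₂ ht₂ => mul_le_mul_of_nonneg_right ?_ (hF0 y)⟩
  obtain ⟨n, hn⟩ := (hdtop.eventually_ge_atTop ⟨t₂, ht₂⟩).exists
  obtain ⟨m, hm⟩ := (hebot.eventually_le_atBot ⟨t₁, ht₁⟩).exists
  linarith [hG y (show t₂ ≤ d n from hn), hG y (show (e m : ℝ) ≤ t₁ from hm),
    le_ciSup (hsup y) n, ciInf_le (hinf y) m]

end Integration

section WeightedCount

variable {Y : Type*} [MeasurableSpace Y] {ι : Type*} [Fintype ι]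

noncomputable def weightedCount (ν : Measure Y) (T : Y → ι → Set ℝ) (F : Y → ℝ) (t : ℝ) : ℝ :=
  ∫ y, ((piecesMeeting (T y) (Iic t)).card : ℝ) * F y ∂ν

variable {ν : Measure Y} {I : Set ℝ} {T : Y → ι → Set ℝ} {F : Y → ℝ}

theorem integrable_card_piecesMeeting_Iic_mul (hI : I.OrdConnected)
    (hT : ∀ y, IsIntervalPartition I (T y))
    (hTmeas : ∀ i, MeasurableSet {p : Y × ℝ | p.2 ∈ T p.1 i}) (hF : Integrable F ν) (t : ℝ) :
    Integrable (fun y => ((piecesMeeting (T y) (Iic t)).card : ℝ) * F y) ν :=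
  hF.bdd_mul (measurable_card_piecesMeeting_Iic hI hT hTmeas t).aestronglyMeasurable
    (c := Fintype.card ι) (ae_of_all _ fun y => by
      rw [Real.norm_natCast]
      exact_mod_cast Finset.card_le_univ _)

theorem weightedCount_mono (hI : I.OrdConnected) (hT : ∀ y, IsIntervalPartition I (T y))
    (hTmeas : ∀ i, MeasurableSet {p : Y × ℝ | p.2 ∈ T p.1 i}) (hF : Integrable F ν)
    (hF0 : ∀ y, 0 ≤ F y) : Monotone (weightedCount ν T F) := fun _ _ hst =>
  integral_mono (integrable_card_piecesMeeting_Iic_mul hI hT hTmeas hF _)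
    (integrable_card_piecesMeeting_Iic_mul hI hT hTmeas hF _) fun y =>
    mul_le_mul_of_nonneg_right (monotone_card_piecesMeeting_Iic (T y) hst) (hF0 y)

theorem weightedCount_le (hI : I.OrdConnected) (hT : ∀ y, IsIntervalPartition I (T y))
    (hTmeas : ∀ i, MeasurableSet {p : Y × ℝ | p.2 ∈ T p.1 i}) (hF : Integrable F ν)
    (hF0 : ∀ y, 0 ≤ F y) (t : ℝ) :
    weightedCount ν T F t ≤ Fintype.card ι * ∫ y, F y ∂ν := by
  rw [← integral_const_mul]
  exact integral_mono (integrable_card_piecesMeeting_Iic_mul hI hT hTmeas hF _)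
    (hF.const_mul _) fun y =>
    mul_le_mul_of_nonneg_right (Nat.cast_le.mpr (Finset.card_le_univ _)) (hF0 y)

end WeightedCount

theorem norm_average_le_of_oscillation_le {Y : Type*} [MeasurableSpace Y] (ν : Measure Y)
    {ι : Type*} [Fintype ι] [Nonempty ι] {I : Set ℝ} (hI : I.OrdConnected)
    (N : Set ℝ → (ℝ → ℂ) → ℝ)
    (hmono : ∀ J' J : Set ℝ, J' ⊆ J → ∀ φf, N J' φf ≤ N J φf)
    (hsub : ∀ J₁ J₂ : Set ℝ, (J₁ ∪ J₂).OrdConnected →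
      ∀ φf, N (J₁ ∪ J₂) φf ≤ N J₁ φf + N J₂ φf)
    (φ : Y → ℝ → ℂ) {F : Y → ℝ} (hF : Integrable F ν) (hF0 : ∀ y, 0 ≤ F y)
    (hMink : ∀ (J : Set ℝ) (g : Y → ℝ), Integrable g ν →
      (∀ y, N J (φ y) ≤ g y) →
      N J (fun t => ∫ y, φ y t ∂ν) ≤ ∫ y, g y ∂ν)
    {T : Y → ι → Set ℝ} (hTmeas : ∀ i, MeasurableSet {p : Y × ℝ | p.2 ∈ T p.1 i})
    (hT : ∀ y, IsIntervalPartition I (T y)) (hbound : ∀ y i, N (T y i) (φ y) ≤ F y)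
    {P : Set ℝ} (hP : P.OrdConnected) (hPI : P ⊆ I) {C : ℝ} (hC : 0 ≤ C)
    (hosc : ∀ t₁ ∈ P, ∀ t₂ ∈ P, weightedCount ν T F t₂ - weightedCount ν T F t₁ ≤ C) :
    N P (fun t => ∫ y, φ y t ∂ν) ≤ C + ∫ y, F y ∂ν := by
  rcases P.eq_empty_or_nonempty with rfl | hPne
  · obtain ⟨i⟩ := ‹Nonempty ι›
    exact (hMink ∅ F hF fun y => (hmono _ _ (empty_subset _) _).trans (hbound y i)).trans
      (le_add_of_nonneg_left hC)
  obtain ⟨g, hg, hgC, hgle⟩ := exists_integrable_majorant_of_oscillation_le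
    (G := fun y t => ((piecesMeeting (T y) (Iic t)).card : ℝ)) (B := Fintype.card ι)
    (fun y => monotone_card_piecesMeeting_Iic (T y))
    (fun y t => by
      rw [Nat.abs_cast]
      exact Nat.cast_le.mpr (Finset.card_le_univ _))
    (measurable_card_piecesMeeting_Iic hI hT hTmeas) hF hF0 hP hPne hosc
  refine (hMink P g hg fun y => ?_).trans hgC
  obtain ⟨t₁, ht₁, t₂, ht₂, hcount⟩ := (hT y).exists_card_piecesMeeting_add_le hPI hPne
  have hcount' : ((piecesMeeting (T y) P).card : ℝ) ≤
      (piecesMeeting (T y) (Iic t₂)).card - (piecesMeeting (T y) (Iic t₁)).card + 1 := by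
    have : ((piecesMeeting (T y) P).card + (piecesMeeting (T y) (Iic t₁)).card : ℝ) ≤
        (piecesMeeting (T y) (Iic t₂)).card + 1 := by exact_mod_cast hcount
    linarith
  calc N P (φ y) ≤ (piecesMeeting (T y) P).card * F y :=
        (hT y).le_card_piecesMeeting_mul (N · (φ y)) (fun J' J h => hmono J' J h _)
          (fun J₁ J₂ h => hsub J₁ J₂ h _) (hbound y) hP hPI hPne
    _ ≤ _ := mul_le_mul_of_nonneg_right hcount' (hF0 y)
    _ ≤ g y := hgle y t₁ ht₁ t₂ ht₂

/-- The interval containing `t` is indexed by the least `k` with `f t ≤ (k + 1) w`. -/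
theorem exists_isIntervalPartition_oscillation_le {M : ℕ} (hM : 1 ≤ M) {I : Set ℝ}
    (hI : I.OrdConnected) {f : ℝ → ℝ} (hf : Monotone f) (hf0 : ∀ t, 0 ≤ f t) {w : ℝ}
    (hfw : ∀ t, f t ≤ M * w) : ∃ J : Fin M → Set ℝ, IsIntervalPartition I J ∧
      ∀ i, ∀ t₁ ∈ J i, ∀ t₂ ∈ J i, f t₂ - f t₁ ≤ w := by
  set k : ℝ → ℕ := fun t => sInf {n : ℕ | f t ≤ (n + 1) * w}
  have htop : ∀ t, M - 1 ∈ {n : ℕ | f t ≤ (n + 1) * w} := fun t => by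
    simpa [Nat.cast_sub hM] using hfw t
  have hk : ∀ t, f t ≤ (k t + 1) * w := fun t => Nat.sInf_mem ⟨_, htop t⟩
  have hkM : ∀ t, k t < M := fun t => (Nat.sInf_le (htop t)).trans_lt (by omega)
  have hkmono : Monotone k := fun t t' htt' => Nat.sInf_le ((hf htt').trans (hk t'))
  refine ⟨fun i => {t ∈ I | k t = i}, ⟨?_, ?_, fun i => ?_⟩, ?_⟩
  · ext t
    simp only [mem_iUnion, mem_ofPred_eq]
    exact ⟨fun ⟨_, ht, _⟩ => ht, fun ht => ⟨⟨k t, hkM t⟩, ht, rfl⟩⟩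
  · intro i j hij
    exact disjoint_left.mpr fun t hi hj => hij (Fin.ext (hi.2.symm.trans hj.2))
  · exact hI.inter (ordConnected_singleton.preimage_mono hkmono)
  · rintro i t₁ ⟨-, h₁⟩ t₂ ⟨-, h₂⟩
    have hlow : (k t₂ : ℝ) * w ≤ f t₁ := by
      rw [h₂.trans h₁.symm]
      rcases Nat.eq_zero_or_pos (k t₁) with h0 | hpos
      · rw [h0, Nat.cast_zero, zero_mul]
        exact hf0 t₁
      · have := Nat.notMem_of_lt_sInf (Nat.sub_lt hpos one_pos)
        change ¬f t₁ ≤ ((k t₁ - 1 : ℕ) + 1) * w at this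
        rw [Nat.cast_sub hpos, Nat.cast_one, sub_add_cancel, not_le] at this
        exact this.le
    linarith [hk t₂]

theorem stmt17_general (I : Set ℝ) (hI : I.OrdConnected)
    (N : Set ℝ → (ℝ → ℂ) → ℝ)
    (hN0 : ∀ J φf, 0 ≤ N J φf)
    (hmono : ∀ J' J : Set ℝ, J' ⊆ J → ∀ φf, N J' φf ≤ N J φf)
    (hsub : ∀ J₁ J₂ : Set ℝ, (J₁ ∪ J₂).OrdConnected →
      ∀ φf, N (J₁ ∪ J₂) φf ≤ N J₁ φf + N J₂ φf)
    {Y : Type*} [MeasurableSpace Y] (ν : Measure Y)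
    (φ : Y → ℝ → ℂ) (M : ℕ) (hM : 1 ≤ M)
    (F : Y → ℝ) (hF : Integrable F ν)
    (hMink : ∀ (J : Set ℝ) (g : Y → ℝ), Integrable g ν →
      (∀ y, N J (φ y) ≤ g y) →
      N J (fun t => ∫ y, φ y t ∂ν) ≤ ∫ y, g y ∂ν)
    (T : Y → Fin M → Set ℝ)
    (hTmeas : ∀ i : Fin M, MeasurableSet {p : Y × ℝ | p.2 ∈ T p.1 i})
    (hTcover : ∀ y, (⋃ i, T y i) = I)
    (hTdisj : ∀ y, Pairwise fun i i' => Disjoint (T y i) (T y i'))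
    (hTint : ∀ y i, (T y i).OrdConnected)
    (hbound : ∀ y i, N (T y i) (φ y) ≤ F y) :
    ∃ J : Fin M → Set ℝ,
      (⋃ i, J i) = I ∧
      (Pairwise fun i i' => Disjoint (J i) (J i')) ∧
      (∀ i, (J i).OrdConnected) ∧
      ∀ i, N (J i) (fun t => ∫ y, φ y t ∂ν) ≤ 3 * ∫ y, F y ∂ν := by
  have : Nonempty (Fin M) := ⟨⟨0, hM⟩⟩
  have hF0 : ∀ y, 0 ≤ F y := fun y => (hN0 _ _).trans (hbound y ⟨0, hM⟩)
  have hA : 0 ≤ ∫ y, F y ∂ν := integral_nonneg hF0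
  have hT : ∀ y, IsIntervalPartition I (T y) := fun y => ⟨hTcover y, hTdisj y, hTint y⟩
  obtain ⟨J, ⟨hcover, hdisj, hconn⟩, hosc⟩ := exists_isIntervalPartition_oscillation_le hM hI
    (weightedCount_mono hI hT hTmeas hF hF0)
    (fun t => integral_nonneg fun y => mul_nonneg (Nat.cast_nonneg _) (hF0 y))
    (w := 2 * ∫ y, F y ∂ν) fun t => by
      have := weightedCount_le hI hT hTmeas hF hF0 t
      rw [Fintype.card_fin] at this
      exact this.trans (mul_le_mul_of_nonneg_left (by linarith) (Nat.cast_nonneg M))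
  refine ⟨J, hcover, hdisj, hconn, fun i => ?_⟩
  have := norm_average_le_of_oscillation_le ν hI N hmono hsub φ hF hF0 hMink hTmeas hT hbound
    (hconn i) (fun t ht => hcover ▸ mem_iUnion_of_mem i ht) (by positivity) (hosc i)
  linarith

/-- **Interval refinement with controlled variation (divisibility).**
Given a family of norms `N J` on functions, indexed by subintervals `J` of the
interval `I`, monotone under restriction, subadditive under concatenation, and
satisfying Minkowski's integral inequality, and given for each `y ∈ Y` a partition
of `I` into at most `M` intervals on each of which `N J (φ y) ≤ F y`, there is a
single partition `J` of `I` into at most `M` intervals on each of which the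
`ν`-average `∫_Y φ_y dν(y)` has norm at most `3 ∫_Y F dν`. -/
theorem stmt17 (I : Set ℝ) (hI : I.OrdConnected)
    (N : Set ℝ → (ℝ → ℂ) → ℝ)
    (hN0 : ∀ J φf, 0 ≤ N J φf)
    (hmono : ∀ J' J : Set ℝ, J' ⊆ J → ∀ φf, N J' φf ≤ N J φf)
    (hsub : ∀ J₁ J₂ : Set ℝ, (J₁ ∪ J₂).OrdConnected →
      ∀ φf, N (J₁ ∪ J₂) φf ≤ N J₁ φf + N J₂ φf)
    {Y : Type*} [MeasurableSpace Y] (ν : Measure Y) [IsFiniteMeasure ν]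
    (φ : Y → ℝ → ℂ) (M : ℕ) (hM : 1 ≤ M)
    (F : Y → ℝ) (hF : Integrable F ν)
    (hMink : ∀ (J : Set ℝ) (g : Y → ℝ), Integrable g ν →
      (∀ y, N J (φ y) ≤ g y) →
      N J (fun t => ∫ y, φ y t ∂ν) ≤ ∫ y, g y ∂ν)
    (T : Y → Fin M → Set ℝ)
    (hTmeas : ∀ i : Fin M, MeasurableSet {p : Y × ℝ | p.2 ∈ T p.1 i})
    (hTcover : ∀ y, (⋃ i, T y i) = I)
    (hTdisj : ∀ y, Pairwise fun i i' => Disjoint (T y i) (T y i'))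
    (hTint : ∀ y i, (T y i).OrdConnected)
    (hbound : ∀ y i, N (T y i) (φ y) ≤ F y) :
    ∃ J : Fin M → Set ℝ,
      (⋃ i, J i) = I ∧
      (Pairwise fun i i' => Disjoint (J i) (J i')) ∧
      (∀ i, (J i).OrdConnected) ∧
      ∀ i, N (J i) (fun t => ∫ y, φ y t ∂ν) ≤ 3 * ∫ y, F y ∂ν :=
  stmt17_general I hI N hN0 hmono hsub ν φ M hM F hF hMink T hTmeas hTcover hTdisj hTint hbound
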